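/- For f holomorphic on the unit disc with ‖f‖_{H^p} < ∞, the pointwise Hardy–Littlewood estimate holds: there exists C_p > 0 depending only on p such that |f(z)| ≤ C_p (1-|z|)^{-1/p} ‖f‖_{H^p} for every z ∈ 𝔻. -/

import Mathlib

open MeasureTheory Real Filter Set

noncomputable def hpMean (f : ℂ → ℂ) (p r : ℝ) : ℝ :=
  (2 * π)⁻¹ * ∫ θ in (0:ℝ)..(2 * π), ‖f ((r:ℂ) * Complex.exp ((θ:ℝ) * Complex.I))‖ ^ p

def MemHp (p : ℝ) (f : ℂ → ℂ) : Prop :=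
  DifferentiableOn ℂ f (Metric.ball 0 1) ∧
  BddAbove (Set.range fun r : Set.Ico (0:ℝ) 1 => hpMean f p r)

/-!
For `p = 1` the Cauchy integral formula on the circle of radius `(1 + |z|)/2` gives the estimate
directly, and applying an estimate for `q` to `fⁿ` gives it for `n q`; so it holds for every
integer exponent.

To pass from an exponent `q` to a smaller `p`, apply the `q`-estimate to the dilates `f(R ·)`,
whose `H^q` means are at most `(sup_{|u| ≤ R} |f u|)^(q-p)` times the `H^p` means of `f`.
Weighting by the distance to a circle of radius `s < 1`, the quantity
`S = sup_{|w| ≤ s} (s - |w|)^(1/p) |f w|` is finite and satisfies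
`S ≤ A ‖f‖_{H^p}^(p/q) S^(1 - p/q)`, hence `S ≤ A^(q/p) ‖f‖_{H^p}`.
-/

open Metric

-- `hpSup f p = ‖f‖_{H^p} ^ p`
noncomputable def hpSup (f : ℂ → ℂ) (p : ℝ) : ℝ :=
  ⨆ r : Set.Ico (0:ℝ) 1, hpMean f p r

def HardyLittlewoodBound (p C : ℝ) : Prop :=
  ∀ f : ℂ → ℂ, MemHp p f → ∀ z ∈ ball (0:ℂ) 1,
    ‖f z‖ ≤ C * (1 - ‖z‖) ^ (-p⁻¹) * hpSup f p ^ p⁻¹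

def HardyLittlewoodEstimate (p : ℝ) : Prop :=
  ∃ C > (0:ℝ), HardyLittlewoodBound p C

lemma hpMean_eq_circleMap (f : ℂ → ℂ) (p r : ℝ) :
    hpMean f p r = (2 * π)⁻¹ * ∫ θ in (0:ℝ)..(2 * π), ‖f (circleMap 0 r θ)‖ ^ p := by
  simp only [hpMean, circleMap_zero]

lemma hpMean_nonneg (f : ℂ → ℂ) (p r : ℝ) : 0 ≤ hpMean f p r :=
  mul_nonneg (by positivity) <| intervalIntegral.integral_nonneg two_pi_pos.le
    fun _ _ => rpow_nonneg (norm_nonneg _) _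

lemma hpSup_nonneg (f : ℂ → ℂ) (p : ℝ) : 0 ≤ hpSup f p :=
  Real.iSup_nonneg fun r => hpMean_nonneg f p r

lemma hpSup_le {f : ℂ → ℂ} {p M : ℝ} (hM0 : 0 ≤ M)
    (hM : ∀ r, 0 ≤ r → r < 1 → hpMean f p r ≤ M) : hpSup f p ≤ M :=
  Real.iSup_le (fun r => hM r r.2.1 r.2.2) hM0

lemma MemHp.hpMean_le_hpSup {f : ℂ → ℂ} {p r : ℝ} (hf : MemHp p f) (hr0 : 0 ≤ r)
    (hr1 : r < 1) : hpMean f p r ≤ hpSup f p :=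
  le_ciSup hf.2 ⟨r, hr0, hr1⟩

lemma ContinuousOn.continuous_comp_circleMap {f : ℂ → ℂ} {r : ℝ}
    (hf : ContinuousOn f (closedBall 0 r)) (hr : 0 ≤ r) :
    Continuous fun θ => f (circleMap 0 r θ) :=
  hf.comp_continuous (continuous_circleMap 0 r) (circleMap_mem_closedBall 0 hr)

lemma norm_le_div_mul_hpMean_one {f : ℂ → ℂ} {r : ℝ} {z : ℂ}
    (hf : DifferentiableOn ℂ f (closedBall 0 r)) (hz : ‖z‖ < r) :
    ‖f z‖ ≤ r / (r - ‖z‖) * hpMean f 1 r := by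
  have hr : 0 < r := (norm_nonneg z).trans_lt hz
  have hcauchy := hf.circleIntegral_sub_inv_smul (mem_ball_zero_iff.2 hz)
  have hbound : ∀ θ, ‖deriv (circleMap 0 r) θ • ((circleMap 0 r θ - z)⁻¹ • f (circleMap 0 r θ))‖
      ≤ r / (r - ‖z‖) * ‖f (circleMap 0 r θ)‖ := fun θ => by
    have hdist : r - ‖z‖ ≤ ‖circleMap 0 r θ - z‖ := by
      simpa [abs_of_pos hr] using norm_sub_norm_le (circleMap 0 r θ) z
    rw [deriv_circleMap, norm_smul, norm_smul, norm_mul, norm_circleMap_zero, abs_of_pos hr,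
      Complex.norm_I, mul_one, norm_inv, ← mul_assoc, div_eq_mul_inv]
    gcongr
  have hint : 2 * π * ‖f z‖ ≤ ∫ θ in (0:ℝ)..(2 * π), r / (r - ‖z‖) * ‖f (circleMap 0 r θ)‖ := by
    calc 2 * π * ‖f z‖ = ‖∮ w in C(0, r), (w - z)⁻¹ • f w‖ := by
          rw [hcauchy, norm_smul]
          simp [abs_of_pos pi_pos]
      _ ≤ _ := intervalIntegral.norm_integral_le_of_norm_le two_pi_pos.le
          (Eventually.of_forall fun θ _ => hbound θ)
          ((continuous_const.mul ((hf.continuousOn.continuous_comp_circleMap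
            hr.le).norm)).intervalIntegrable _ _)
  rw [intervalIntegral.integral_const_mul] at hint
  calc ‖f z‖ = (2 * π)⁻¹ * (2 * π * ‖f z‖) := by field_simp
    _ ≤ (2 * π)⁻¹ * (r / (r - ‖z‖) * ∫ θ in (0:ℝ)..(2 * π), ‖f (circleMap 0 r θ)‖) := by
      gcongr
    _ = r / (r - ‖z‖) * hpMean f 1 r := by
      simp only [hpMean_eq_circleMap, rpow_one]
      ring

lemma hardyLittlewoodEstimate_one : HardyLittlewoodEstimate 1 := by
  refine ⟨2, two_pos, fun f hf z hz => ?_⟩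
  have ha : ‖z‖ < 1 := mem_ball_zero_iff.1 hz
  set r := (1 + ‖z‖) / 2 with hr
  have hr1 : r < 1 := by rw [hr]; linarith
  have hsub : closedBall (0:ℂ) r ⊆ ball 0 1 := closedBall_subset_ball hr1
  have hfz := norm_le_div_mul_hpMean_one (hf.1.mono hsub) (by rw [hr]; linarith : ‖z‖ < r)
  have hkernel : r / (r - ‖z‖) ≤ 2 / (1 - ‖z‖) := by
    rw [hr, div_le_div_iff₀ (by linarith) (by linarith)]
    nlinarith [norm_nonneg z]
  simp only [inv_one, rpow_neg_one, rpow_one, ← div_eq_mul_inv]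
  exact hfz.trans (mul_le_mul hkernel (hf.hpMean_le_hpSup (by positivity) hr1)
    (hpMean_nonneg _ _ _) (by positivity))

lemma hpMean_pow (f : ℂ → ℂ) (n : ℕ) (p r : ℝ) :
    hpMean (fun w => f w ^ n) p r = hpMean f (n * p) r := by
  simp only [hpMean, norm_pow, rpow_natCast_mul (norm_nonneg _)]

lemma hpSup_pow (f : ℂ → ℂ) (n : ℕ) (p : ℝ) :
    hpSup (fun w => f w ^ n) p = hpSup f (n * p) := by
  simp only [hpSup, hpMean_pow]

lemma MemHp.pow {f : ℂ → ℂ} {p : ℝ} {n : ℕ} (hf : MemHp (n * p) f) :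
    MemHp p fun w => f w ^ n :=
  ⟨hf.1.pow n, by simpa only [hpMean_pow] using hf.2⟩

lemma HardyLittlewoodEstimate.nat_mul {q : ℝ} (h : HardyLittlewoodEstimate q) {n : ℕ}
    (hn : n ≠ 0) : HardyLittlewoodEstimate (n * q) := by
  obtain ⟨C, hC, hCf⟩ := h
  refine ⟨C ^ (n⁻¹ : ℝ), by positivity, fun f hf z hz => ?_⟩
  have h1z : 0 ≤ 1 - ‖z‖ := by linarith [mem_ball_zero_iff.1 hz]
  have hfz := hCf _ hf.pow z hz
  rw [norm_pow, hpSup_pow] at hfz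
  calc ‖f z‖ = (‖f z‖ ^ n) ^ (n⁻¹ : ℝ) := (pow_rpow_inv_natCast (norm_nonneg _) hn).symm
    _ ≤ (C * (1 - ‖z‖) ^ (-q⁻¹) * hpSup f (n * q) ^ q⁻¹) ^ (n⁻¹ : ℝ) := by gcongr
    _ = C ^ (n⁻¹ : ℝ) * (1 - ‖z‖) ^ (-(n * q)⁻¹) * hpSup f (n * q) ^ (n * q)⁻¹ := by
      have hM := hpSup_nonneg f (n * q)
      rw [mul_rpow (by positivity) (by positivity), mul_rpow hC.le (by positivity),
        ← rpow_mul h1z, ← rpow_mul hM, mul_inv, mul_comm (n : ℝ)⁻¹]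
      ring_nf

lemma hpMean_comp_mul (f : ℂ → ℂ) (p R r : ℝ) :
    hpMean (fun w => f (R * w)) p r = hpMean f p (R * r) := by
  simp only [hpMean, Complex.ofReal_mul, mul_assoc]

lemma hpMean_le_rpow_sub_mul_hpMean {f : ℂ → ℂ} {p q r K : ℝ}
    (hf : ContinuousOn f (closedBall 0 r)) (hr : 0 ≤ r) (hp : 0 < p) (hpq : p ≤ q)
    (hK : ∀ w ∈ sphere (0:ℂ) r, ‖f w‖ ≤ K) :
    hpMean f q r ≤ K ^ (q - p) * hpMean f p r := by
  have hcont := (hf.continuous_comp_circleMap hr).norm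
  have hpoint : ∀ θ, ‖f (circleMap 0 r θ)‖ ^ q ≤ K ^ (q - p) * ‖f (circleMap 0 r θ)‖ ^ p :=
    fun θ => by
      have hx := norm_nonneg (f (circleMap 0 r θ))
      rw [← sub_add_cancel q p, rpow_add' hx (by linarith), sub_add_cancel]
      gcongr
      exact hK _ (circleMap_mem_sphere 0 hr θ)
  rw [hpMean_eq_circleMap, hpMean_eq_circleMap, mul_left_comm,
    ← intervalIntegral.integral_const_mul (K ^ (q - p))]
  refine mul_le_mul_of_nonneg_left ?_ (inv_nonneg.2 two_pi_pos.le)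
  exact intervalIntegral.integral_mono_on two_pi_pos.le
    ((hcont.rpow_const fun _ => Or.inr (by linarith)).intervalIntegrable _ _)
    ((continuous_const.mul (hcont.rpow_const fun _ => Or.inr hp.le)).intervalIntegrable _ _)
    fun θ _ => hpoint θ

lemma HardyLittlewoodBound.norm_le_of_norm_le {p q C M K R : ℝ} {f : ℂ → ℂ} {w : ℂ}
    (hC : HardyLittlewoodBound q C) (hC0 : 0 ≤ C) (hp : 0 < p) (hpq : p ≤ q)
    (hf : DifferentiableOn ℂ f (ball 0 1))
    (hM : ∀ r, 0 ≤ r → r < 1 → hpMean f p r ≤ M) (hR1 : R < 1)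
    (hK : ∀ u ∈ closedBall (0:ℂ) R, ‖f u‖ ≤ K) (hw : ‖w‖ < R) :
    ‖f w‖ ≤ C * (R - ‖w‖) ^ (-q⁻¹) * (K ^ (q - p) * M) ^ q⁻¹ := by
  have hR0 : 0 < R := (norm_nonneg w).trans_lt hw
  have hM0 : 0 ≤ M := (hpMean_nonneg f p 0).trans (hM 0 le_rfl one_pos)
  have hK0 : 0 ≤ K := (norm_nonneg _).trans (hK 0 (mem_closedBall_self hR0.le))
  set g : ℂ → ℂ := fun ζ => f (R * ζ)
  have hmaps : MapsTo (fun ζ : ℂ => (R:ℂ) * ζ) (closedBall 0 1) (closedBall 0 R) :=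
    fun ζ hζ => by
      rw [mem_closedBall_zero_iff] at hζ ⊢
      rw [norm_mul, Complex.norm_real, norm_of_nonneg hR0.le]
      nlinarith [norm_nonneg ζ]
  have hgd : DifferentiableOn ℂ g (ball 0 1) :=
    hf.comp (by fun_prop) <| (hmaps.mono_left ball_subset_closedBall).mono_right
      (closedBall_subset_ball hR1)
  have hgM : ∀ r, 0 ≤ r → r < 1 → hpMean g q r ≤ K ^ (q - p) * M := fun r hr0 hr1 => by
    have hRr : R * r < 1 := by nlinarith
    rw [hpMean_comp_mul]
    refine (hpMean_le_rpow_sub_mul_hpMean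
      (hf.continuousOn.mono (closedBall_subset_ball hRr)) (by positivity) hp hpq
      fun u hu => hK u ?_).trans ?_
    · rw [mem_closedBall_zero_iff, mem_sphere_zero_iff_norm.1 hu]
      nlinarith
    · exact mul_le_mul_of_nonneg_left (hM _ (by positivity) hRr) (by positivity)
  have hg : MemHp q g := ⟨hgd, ⟨_, forall_mem_range.2 fun r => hgM r r.2.1 r.2.2⟩⟩
  have hwR : ‖w / R‖ = ‖w‖ / R := by
    rw [norm_div, Complex.norm_real, norm_of_nonneg hR0.le]
  have hgw := hC g hg (w / R) (by rw [mem_ball_zero_iff, hwR, div_lt_one hR0]; exact hw)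
  have hRw : R - ‖w‖ ≤ 1 - ‖w / R‖ := by
    rw [hwR, le_sub_iff_add_le, ← le_sub_iff_add_le', div_le_iff₀ hR0]
    nlinarith [norm_nonneg w]
  simp only [g, mul_div_cancel₀ w (Complex.ofReal_ne_zero.2 hR0.ne')] at hgw
  refine hgw.trans (mul_le_mul (mul_le_mul_of_nonneg_left ?_ hC0) ?_ (by
    have := hpSup_nonneg g q; positivity) (by positivity))
  · exact rpow_le_rpow_of_nonpos (by linarith) hRw (by have := hp.trans_le hpq; simp [this.le])
  · exact rpow_le_rpow (hpSup_nonneg g q) (hpSup_le (by positivity) hgM)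
      (inv_nonneg.2 (hp.le.trans hpq))

lemma le_rpow_inv_of_le_mul_rpow_one_sub {x c ε : ℝ} (hx : 0 ≤ x) (hc : 0 ≤ c) (hε : 0 < ε)
    (h : x ≤ c * x ^ (1 - ε)) : x ≤ c ^ ε⁻¹ := by
  rcases hx.eq_or_lt with rfl | hx
  · positivity
  have hsplit : x = x ^ ε * x ^ (1 - ε) := by
    rw [← rpow_add hx, add_sub_cancel, rpow_one]
  have hxε : x ^ ε ≤ c := by
    refine le_of_mul_le_mul_right ?_ (rpow_pos_of_pos hx (1 - ε))
    rwa [← hsplit]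
  calc x = (x ^ ε) ^ ε⁻¹ := (rpow_rpow_inv hx.le hε.ne').symm
    _ ≤ c ^ ε⁻¹ := by gcongr

-- The powers of `δ` cancel: this is what makes `(s - ‖w‖) ^ p⁻¹` the right weight.
lemma weight_mul_localBound_eq {p q C S M δ : ℝ} (hp : 0 < p) (hq : 0 < q) (hS : 0 ≤ S)
    (hM : 0 ≤ M) (hδ : 0 < δ) :
    (2 * δ) ^ p⁻¹ * (C * δ ^ (-q⁻¹) * ((S * δ ^ (-p⁻¹)) ^ (q - p) * M) ^ q⁻¹)
      = C * 2 ^ p⁻¹ * M ^ q⁻¹ * S ^ (1 - p / q) := by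
  have hδS : ((S * δ ^ (-p⁻¹)) ^ (q - p) * M) ^ q⁻¹
      = S ^ (1 - p / q) * δ ^ (-p⁻¹ * (q - p) * q⁻¹) * M ^ q⁻¹ := by
    rw [mul_rpow (by positivity) hM, mul_rpow hS (by positivity), mul_rpow (by positivity)
      (by positivity), ← rpow_mul hS, ← rpow_mul hδ.le, ← rpow_mul hδ.le]
    congr 3
    field_simp
  have hδpow : δ ^ p⁻¹ * δ ^ (-q⁻¹) * δ ^ (-p⁻¹ * (q - p) * q⁻¹) = 1 := by
    rw [← rpow_add hδ, ← rpow_add hδ]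
    convert rpow_zero δ using 2
    field_simp
    ring
  rw [hδS, mul_rpow zero_le_two hδ.le]
  linear_combination (C * 2 ^ p⁻¹ * M ^ q⁻¹ * S ^ (1 - p / q)) * hδpow

lemma HardyLittlewoodBound.weighted_norm_le {p q C M S s : ℝ} {f : ℂ → ℂ} {w : ℂ}
    (hC : HardyLittlewoodBound q C) (hC0 : 0 ≤ C) (hp : 0 < p) (hpq : p ≤ q)
    (hf : DifferentiableOn ℂ f (ball 0 1))
    (hM : ∀ r, 0 ≤ r → r < 1 → hpMean f p r ≤ M) (hs : s < 1) (hS0 : 0 ≤ S)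
    (hS : ∀ u ∈ closedBall (0:ℂ) s, (s - ‖u‖) ^ p⁻¹ * ‖f u‖ ≤ S)
    (hw : w ∈ closedBall (0:ℂ) s) :
    (s - ‖w‖) ^ p⁻¹ * ‖f w‖ ≤ C * 2 ^ p⁻¹ * M ^ q⁻¹ * S ^ (1 - p / q) := by
  have hM0 : 0 ≤ M := (hpMean_nonneg f p 0).trans (hM 0 le_rfl one_pos)
  rw [mem_closedBall_zero_iff] at hw
  rcases hw.eq_or_lt with hws | hws
  · rw [hws, sub_self, zero_rpow (inv_pos.2 hp).ne', zero_mul]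
    positivity
  set δ := (s - ‖w‖) / 2 with hδ
  have hδ0 : 0 < δ := by rw [hδ]; linarith
  have hK : ∀ u ∈ closedBall (0:ℂ) (‖w‖ + δ), ‖f u‖ ≤ S * δ ^ (-p⁻¹) := fun u hu => by
    rw [mem_closedBall_zero_iff] at hu
    have hδu : δ ≤ s - ‖u‖ := by rw [hδ] at hu ⊢; linarith
    have hδp : 0 < δ ^ p⁻¹ := rpow_pos_of_pos hδ0 _
    rw [rpow_neg hδ0.le, ← div_eq_mul_inv, le_div_iff₀ hδp, mul_comm]
    exact (mul_le_mul_of_nonneg_right (rpow_le_rpow hδ0.le hδu (inv_pos.2 hp).le)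
      (norm_nonneg _)).trans (hS u (by rw [mem_closedBall_zero_iff]; linarith))
  have hfw := hC.norm_le_of_norm_le hC0 hp hpq hf hM (by rw [hδ]; linarith) hK
    (by linarith : ‖w‖ < ‖w‖ + δ)
  rw [add_sub_cancel_left] at hfw
  calc (s - ‖w‖) ^ p⁻¹ * ‖f w‖
      ≤ (2 * δ) ^ p⁻¹ * (C * δ ^ (-q⁻¹) * ((S * δ ^ (-p⁻¹)) ^ (q - p) * M) ^ q⁻¹) := by
        rw [hδ, mul_div_cancel₀ _ two_ne_zero]
        gcongr
    _ = C * 2 ^ p⁻¹ * M ^ q⁻¹ * S ^ (1 - p / q) :=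
        weight_mul_localBound_eq hp (hp.trans_le hpq) hS0 hM0 hδ0

lemma HardyLittlewoodEstimate.of_lt {p q : ℝ} (hp : 0 < p) (hpq : p < q)
    (h : HardyLittlewoodEstimate q) : HardyLittlewoodEstimate p := by
  obtain ⟨C, hC0, hC⟩ := h
  have hq := hp.trans hpq
  refine ⟨(C * 2 ^ p⁻¹) ^ (q / p) * 2 ^ p⁻¹, by positivity, fun f hf z hz => ?_⟩
  have hz1 : ‖z‖ < 1 := mem_ball_zero_iff.1 hz
  set s := (1 + ‖z‖) / 2 with hs
  have hs1 : s < 1 := by rw [hs]; linarith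
  set weighted : ℂ → ℝ := fun u => (s - ‖u‖) ^ p⁻¹ * ‖f u‖
  have hcont : ContinuousOn weighted (closedBall 0 s) :=
    ((continuous_const.sub continuous_norm).rpow_const fun _ => Or.inr (inv_pos.2 hp).le
      ).continuousOn.mul (hf.1.continuousOn.mono (closedBall_subset_ball hs1)).norm
  set S := sSup (weighted '' closedBall 0 s)
  have hS : ∀ u ∈ closedBall (0:ℂ) s, weighted u ≤ S := fun u hu =>
    le_csSup ((isCompact_closedBall 0 s).bddAbove_image hcont) (mem_image_of_mem _ hu)
  have hzs : z ∈ closedBall (0:ℂ) s := by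
    rw [mem_closedBall_zero_iff, hs]; linarith
  have hS0 : 0 ≤ S :=
    (mul_nonneg (rpow_nonneg (by rw [hs]; linarith) _) (norm_nonneg _)).trans (hS z hzs)
  have habsorb : S ≤ C * 2 ^ p⁻¹ * hpSup f p ^ q⁻¹ * S ^ (1 - p / q) :=
    csSup_le ⟨_, mem_image_of_mem _ hzs⟩ <| forall_mem_image.2 fun u hu =>
      hC.weighted_norm_le hC0.le hp hpq.le hf.1 (fun r => hf.hpMean_le_hpSup) hs1 hS0 hS hu
  have hSM : S ≤ (C * 2 ^ p⁻¹) ^ (q / p) * hpSup f p ^ p⁻¹ := by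
    have hM0 := hpSup_nonneg f p
    have := le_rpow_inv_of_le_mul_rpow_one_sub hS0 (by positivity) (div_pos hp hq) habsorb
    rwa [inv_div, mul_rpow (by positivity) (by positivity), ← rpow_mul hM0,
      inv_mul_eq_div, div_div_cancel_left' hq.ne'] at this
  have h1z : 0 < 1 - ‖z‖ := by linarith
  have hsz : s - ‖z‖ = (1 - ‖z‖) * 2⁻¹ := by rw [hs]; ring
  calc ‖f z‖ = 2 ^ p⁻¹ * (1 - ‖z‖) ^ (-p⁻¹) * weighted z := by
        simp only [weighted, hsz, mul_rpow h1z.le (by norm_num : (0:ℝ) ≤ 2⁻¹),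
          inv_rpow zero_le_two]
        rw [rpow_neg h1z.le]
        field_simp
    _ ≤ 2 ^ p⁻¹ * (1 - ‖z‖) ^ (-p⁻¹) * ((C * 2 ^ p⁻¹) ^ (q / p) * hpSup f p ^ p⁻¹) := by
        gcongr
        exact (hS z hzs).trans hSM
    _ = (C * 2 ^ p⁻¹) ^ (q / p) * 2 ^ p⁻¹ * (1 - ‖z‖) ^ (-p⁻¹) * hpSup f p ^ p⁻¹ := by ring

/-- The Hardy–Littlewood pointwise estimate `|f(z)| ≤ C_p (1-|z|)^{-1/p} ‖f‖_{H^p}`,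
with a constant depending only on `p`. -/
theorem hardy_littlewood_pointwise (p : ℝ) (hp : 0 < p) :
    ∃ C > (0:ℝ), ∀ f : ℂ → ℂ, MemHp p f →
      ∀ z ∈ Metric.ball (0:ℂ) 1,
        ‖f z‖ ≤
          C * (1 - ‖z‖) ^ (-p⁻¹) *
            (⨆ r : Set.Ico (0:ℝ) 1, hpMean f p r) ^ p⁻¹ := by
  obtain ⟨n, hn⟩ := exists_nat_gt p
  have hn0 : n ≠ 0 := (Nat.cast_pos.1 (hp.trans hn)).ne'
  have hHL : HardyLittlewoodEstimate n := by
    simpa only [mul_one] using hardyLittlewoodEstimate_one.nat_mul hn0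
  exact hHL.of_lt hp hn
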